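/- arXiv:1911.10004 — 2 statements merged into one kernel-verified Lean document; each statement's English description precedes it below -/
import Mathlib

section
/- Let G and H be two group structures on the same set X such that the finitary group coarse structures F_G and F_H induce the same linkness relation on subsets of X. Then F_G = F_H. -/
open Set

/-- A coarse structure (ballean) on a set `X`. -/
structure CoarseStruct (X : Type*) where
  sets : Set (Set (X × X))
  diagonal_mem : Set.diagonal X ∈ sets
  diagonal_subset : ∀ E ∈ sets, Set.diagonal X ⊆ E
  comp_mem : ∀ E ∈ sets, ∀ F ∈ sets,
    {p : X × X | ∃ z, (p.1, z) ∈ E ∧ (z, p.2) ∈ F} ∈ sets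
  inv_mem : ∀ E ∈ sets, {p : X × X | (p.2, p.1) ∈ E} ∈ sets
  subset_mem : ∀ E ∈ sets, ∀ E' : Set (X × X),
    Set.diagonal X ⊆ E' → E' ⊆ E → E' ∈ sets
  cover : ∀ p : X × X, ∃ E ∈ sets, p ∈ E

namespace CoarseStruct

variable {X : Type*}

/-- The ball `E[A]` of radius `E` around `A`. -/
def ball (E : Set (X × X)) (A : Set X) : Set X := {y | ∃ a ∈ A, (a, y) ∈ E}

/-- A set is bounded if it is contained in a ball around a point. -/
def IsBounded (C : CoarseStruct X) (B : Set X) : Prop :=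
  ∃ E ∈ C.sets, ∃ x : X, B ⊆ ball E {x}

/-- Closeness: `A δ B`. -/
def Close (C : CoarseStruct X) (A B : Set X) : Prop :=
  ∃ E ∈ C.sets, A ⊆ ball E B ∧ B ⊆ ball E A

/-- Linkness: `A λ B`. -/
def Linked (C : CoarseStruct X) (A B : Set X) : Prop :=
  (C.IsBounded A ∧ C.IsBounded B) ∨
  ∃ A' B' : Set X, A' ⊆ A ∧ B' ⊆ B ∧ ¬C.IsBounded A' ∧ ¬C.IsBounded B' ∧ C.Close A' B'

def LambdaEquiv (C C' : CoarseStruct X) : Prop :=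
  ∀ A B : Set X, C.Linked A B ↔ C'.Linked A B

def DeltaEquiv (C C' : CoarseStruct X) : Prop :=
  ∀ A B : Set X, C.Close A B ↔ C'.Close A B

def Discrete (C : CoarseStruct X) : Prop :=
  ∀ E ∈ C.sets, ∃ B : Set X, C.IsBounded B ∧ ∀ x ∉ B, ball E {x} = {x}

def Large (C : CoarseStruct X) (Y : Set X) : Prop :=
  ∃ E ∈ C.sets, ball E Y = Set.univ

/-- The subballean on `Y` is discrete. -/
def DiscreteOn (C : CoarseStruct X) (Y : Set X) : Prop :=
  ∀ E ∈ C.sets, ∃ B : Set X, C.IsBounded B ∧ ∀ y ∈ Y \ B, ball E {y} ∩ Y = {y}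

def CoarselyDiscrete (C : CoarseStruct X) : Prop :=
  ∃ Y : Set X, C.Large Y ∧ C.DiscreteOn Y

def LambdaRigid (C : CoarseStruct X) : Prop :=
  ∀ C' : CoarseStruct X, LambdaEquiv C C' → C' = C

def DeltaRigid (C : CoarseStruct X) : Prop :=
  ∀ C' : CoarseStruct X, DeltaEquiv C C' → C' = C

def IsBase (C : CoarseStruct X) (B : Set (Set (X × X))) : Prop :=
  B ⊆ C.sets ∧ ∀ E ∈ C.sets, ∃ E' ∈ B, E ⊆ E'

/-- Metrizable: the coarse structure has a countable base. -/
def Metrizable (C : CoarseStruct X) : Prop :=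
  ∃ B : Set (Set (X × X)), B.Countable ∧ C.IsBase B

/-- Ordinal: the coarse structure has a base linearly ordered by inclusion. -/
def Ordinal (C : CoarseStruct X) : Prop :=
  ∃ B : Set (Set (X × X)), C.IsBase B ∧ IsChain (· ⊆ ·) B

def MacroUniform (C : CoarseStruct X) (f : X → ℝ) : Prop :=
  ∀ E ∈ C.sets, ∃ r : ℝ, 0 < r ∧
    ∀ x : X, ∀ y ∈ ball E {x}, ∀ z ∈ ball E {x}, |f y - f z| ≤ r

def Submetrizable (C : CoarseStruct X) : Prop :=
  ¬C.IsBounded Set.univ ∧ ∃ C'' : CoarseStruct X,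
    C.sets ⊆ C''.sets ∧ ¬C''.IsBounded Set.univ ∧ C''.Metrizable

def SlowlyOscillating (C : CoarseStruct X) (f : X → ℝ) : Prop :=
  ∀ E ∈ C.sets, ∀ ε : ℝ, 0 < ε → ∃ B : Set X, C.IsBounded B ∧
    ∀ x ∉ B, ∀ y ∈ ball E {x}, ∀ z ∈ ball E {x}, |f y - f z| < ε

/-- The entourage `H_{(E,Φ)}`: `H[x] = {x}` for `x ∈ Φ` and `H[x] = E[x] \ Φ` for `x ∉ Φ`. -/
def EPhiBase (E : Set (X × X)) (Φ : Set X) : Set (X × X) :=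
  {p | (p.1 ∈ Φ ∧ p.1 = p.2) ∨ (p.1 ∉ Φ ∧ p.2 ∉ Φ ∧ (p.1, p.2) ∈ E)}

/-- The family of entourages of the coarse structure `E_φ` with base `{H_{(E,Φ)}}`. -/
def EPhiSets (C : CoarseStruct X) (φ : Filter X) : Set (Set (X × X)) :=
  {E' | Set.diagonal X ⊆ E' ∧ ∃ E ∈ C.sets, ∃ Φ ∈ φ, E' ⊆ EPhiBase E Φ}

/-- The set `B♯` of ultrafilters containing the complement of every bounded set. -/
def Bsharp (C : CoarseStruct X) : Set (Ultrafilter X) :=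
  {p | ∀ B : Set X, C.IsBounded B → Bᶜ ∈ p}

/-- Parallelity of ultrafilters: `p ∥ q`. -/
def Parallel (C : CoarseStruct X) (p q : Ultrafilter X) : Prop :=
  ∃ E ∈ C.sets, ∀ P ∈ p, ball E P ∈ q

def AsympDisjoint (C : CoarseStruct X) (A B : Set X) : Prop :=
  ∀ E ∈ C.sets, C.IsBounded (ball E A ∩ ball E B)

def AsympNbhd (C : CoarseStruct X) (A U : Set X) : Prop :=
  ∀ E ∈ C.sets, C.IsBounded (ball E A \ U)

def Normal (C : CoarseStruct X) : Prop :=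
  ∀ A B : Set X, C.AsympDisjoint A B →
    ∃ U V : Set X, C.AsympNbhd A U ∧ C.AsympNbhd B V ∧ Disjoint U V

end CoarseStruct

/-- The finitary group coarse structure of a group structure `g` on `X`. -/
def finGroupSets (X : Type*) (g : Group X) : Set (Set (X × X)) :=
  letI := g
  {E' | Set.diagonal X ⊆ E' ∧
    ∃ F : Finset X, ∀ p ∈ E', p.1 = p.2 ∨ ∃ f ∈ F, p.2 = f * p.1}

/-!
In `F_G` the bounded sets are the finite ones, and an entourage belongs to `F_H` iff it has
finitely many `H`-displacements `y * x⁻¹`. Hence `F_G ⊆ F_H` as soon as every left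
`G`-translation `τ` has finitely many `H`-displacements `τ v * v⁻¹`. If some `τ` had infinitely
many, pick points `x n` with distinct displacements and thin them out so that each value
`τ (x m) * (x n)⁻¹` with `m ≠ n` occurs only finitely often. Then `A = {x n}` and `τ A` are
`G`-close, so `G`-linked, so `H`-linked; but an infinite part of `τ A` that is `H`-close to a part
of `A` realises only finitely many displacements, which the thinning rules out.
-/

open Function

namespace CoarseStruct

variable {X : Type*} {C : CoarseStruct X} {A B : Set X}

lemma IsBounded.of_close (hA : C.IsBounded A) (hAB : C.Close A B) : C.IsBounded B := by
  obtain ⟨F, hF, x, hA⟩ := hA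
  obtain ⟨E, hE, -, hB⟩ := hAB
  refine ⟨_, C.comp_mem F hF E hE, x, fun b hb => ?_⟩
  obtain ⟨a, ha, hab⟩ := hB hb
  obtain ⟨x', rfl, hxa⟩ := hA ha
  exact ⟨x', rfl, a, hxa, hab⟩

lemma Close.symm (h : C.Close A B) : C.Close B A := by
  obtain ⟨E, hE, hAB, hBA⟩ := h
  exact ⟨E, hE, hBA, hAB⟩

lemma Close.linked (h : C.Close A B) : C.Linked A B := by
  by_cases hA : C.IsBounded A
  · exact Or.inl ⟨hA, hA.of_close h⟩
  · exact Or.inr ⟨A, B, subset_rfl, subset_rfl, hA, fun hB => hA (hB.of_close h.symm), h⟩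

end CoarseStruct

section FinGroupSets

variable {X : Type*} [Group X] {C : CoarseStruct X}

lemma mem_finGroupSets_iff {E : Set (X × X)} :
    E ∈ finGroupSets X ‹_› ↔ diagonal X ⊆ E ∧ ((fun p : X × X => p.2 * p.1⁻¹) '' E).Finite := by
  refine and_congr_right fun _ => ⟨?_, fun hE => ⟨hE.toFinset, fun p hp => Or.inr ?_⟩⟩
  · rintro ⟨F, hF⟩
    refine (F.finite_toSet.insert 1).subset ?_
    rintro _ ⟨p, hp, rfl⟩
    rcases hF p hp with h | ⟨f, hf, h⟩
    · simp [h]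
    · simp [h, hf]
  · exact ⟨p.2 * p.1⁻¹, hE.mem_toFinset.2 ⟨p, hp, rfl⟩, (inv_mul_cancel_right p.2 p.1).symm⟩

lemma isBounded_iff_finite (hC : C.sets = finGroupSets X ‹_›) {B : Set X} :
    C.IsBounded B ↔ B.Finite := by
  constructor
  · rintro ⟨E, hE, x, hB⟩
    rw [hC, mem_finGroupSets_iff] at hE
    refine (hE.2.image (· * x)).subset fun b hb => ?_
    obtain ⟨x, rfl, hxb⟩ := hB hb
    exact ⟨b * x⁻¹, ⟨(x, b), hxb, rfl⟩, inv_mul_cancel_right b x⟩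
  · intro hB
    refine ⟨diagonal X ∪ {1} ×ˢ B, ?_, 1, fun b hb => ⟨1, rfl, Or.inr ⟨rfl, hb⟩⟩⟩
    rw [hC, mem_finGroupSets_iff]
    refine ⟨subset_union_left, (hB.insert 1).subset ?_⟩
    rintro _ ⟨p, hp | ⟨hp1, hp2⟩, rfl⟩
    · simp [show p.1 = p.2 from hp]
    · simp [show p.1 = 1 from hp1, hp2]

lemma close_image_mul_left (hC : C.sets = finGroupSets X ‹_›) (a : X) (A : Set X) :
    C.Close A ((a * ·) '' A) := by
  set E : Set (X × X) := {p | p.1 = p.2 ∨ p.2 = a * p.1 ∨ p.1 = a * p.2}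
  have hE : E ∈ C.sets := by
    rw [hC, mem_finGroupSets_iff]
    refine ⟨fun p hp => Or.inl hp, (finite_singleton 1 |>.insert a |>.insert a⁻¹).subset ?_⟩
    rintro _ ⟨p, hp | hp | hp, rfl⟩ <;> simp [hp]
  refine ⟨E, hE, fun x hx => ⟨a * x, ⟨x, hx, rfl⟩, Or.inr (Or.inr rfl)⟩, ?_⟩
  rintro _ ⟨x, hx, rfl⟩
  exact ⟨x, hx, Or.inr (Or.inl rfl)⟩

lemma exists_strictMono_finite_quotient_fibers {u v : ℕ → X} (hu : Injective u)
    (hv : Injective v) :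
    ∃ φ : ℕ → ℕ, StrictMono φ ∧ ∀ c : X, {p | ∃ q ≠ p, v (φ p) * (u (φ q))⁻¹ = c}.Finite := by
  set d : ℕ → ℕ → X := fun i j => v i * (u j)⁻¹
  have hd₁ : ∀ j, Injective (d · j) := fun j => (mul_left_injective _).comp hv
  have hd₂ : ∀ i, Injective (d i) := fun i => (mul_right_injective _).comp (inv_injective.comp hu)
  -- Each new index `j` is chosen so that its quotients with every earlier `i` avoid `T i`. A value
  -- `c` lies in `T K` for some `K`, so it is only realised by pairs whose smaller index is `< K`.
  set T : ℕ → Set X := fun i => image2 d (Iic i) (Iic i)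
  have hT_mono : Monotone T := fun i j hij =>
    image2_subset (Iic_subset_Iic.2 hij) (Iic_subset_Iic.2 hij)
  have hT_fin : ∀ i, (T i).Finite := fun i => (finite_Iic i).image2 _ (finite_Iic i)
  obtain ⟨φ, -, hφ⟩ := exists_seq_of_forall_finset_exists (fun _ => True)
      (fun i j => i < j ∧ d j i ∉ T i ∧ d i j ∉ T i) fun s _ => by
    have hbad : (⋃ i ∈ s, Iic i ∪ (d · i) ⁻¹' T i ∪ d i ⁻¹' T i).Finite :=
      s.finite_toSet.biUnion fun i _ => ((finite_Iic i).union
        ((hT_fin i).preimage (hd₁ i).injOn)).union ((hT_fin i).preimage (hd₂ i).injOn)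
    obtain ⟨j, hj⟩ := hbad.exists_notMem
    simp only [mem_iUnion, mem_union, mem_Iic, mem_preimage, not_exists, not_or] at hj
    exact ⟨j, trivial, fun i hi => ⟨not_le.1 (hj i hi).1.1, (hj i hi).1.2, (hj i hi).2⟩⟩
  have hφ_mono : StrictMono φ := fun m n h => (hφ m n h).1
  refine ⟨φ, hφ_mono, fun c => ?_⟩
  rcases eq_empty_or_nonempty {p | ∃ q ≠ p, d (φ p) (φ q) = c} with h | ⟨p₀, q₀, -, hc⟩
  · exact h ▸ finite_empty
  set K := max (φ p₀) (φ q₀)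
  have hcK : c ∈ T K := ⟨φ p₀, mem_Iic.2 (le_max_left _ _), φ q₀, mem_Iic.2 (le_max_right _ _), hc⟩
  have hsmall : ∀ {p q}, p < q → (d (φ q) (φ p) = c ∨ d (φ p) (φ q) = c) → p < K := by
    intro p q hpq hpair
    refine (hφ_mono.id_le p).trans_lt (not_le.1 fun hK => ?_)
    rcases hpair with h | h
    · exact (hφ p q hpq).2.1 (h ▸ hT_mono hK hcK)
    · exact (hφ p q hpq).2.2 (h ▸ hT_mono hK hcK)
  refine ((finite_Iio K).union ((finite_Iio K).biUnion fun q _ =>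
    (finite_singleton c).preimage ((hd₁ (φ q)).comp hφ_mono.injective).injOn)).subset ?_
  rintro p ⟨q, hqp, hpq⟩
  rcases lt_or_gt_of_ne hqp with h | h
  · exact Or.inr (mem_biUnion (hsmall h (Or.inl hpq)) hpq)
  · exact Or.inl (hsmall h (Or.inr hpq))

theorem finite_range_mul_inv_of_forall_linked_image (hC : C.sets = finGroupSets X ‹_›)
    {τ : X → X} (hτ : Injective τ) (hlink : ∀ A : Set X, C.Linked A (τ '' A)) :
    (range fun v => τ v * v⁻¹).Finite := by
  set disp : X → X := fun v => τ v * v⁻¹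
  refine not_infinite.1 fun hinf => ?_
  set x : ℕ → X := rangeSplitting disp ∘ hinf.natEmbedding _
  have hx : Injective (disp ∘ x) := by
    have : disp ∘ x = (↑) ∘ hinf.natEmbedding _ := funext fun n => apply_rangeSplitting disp _
    exact this ▸ Subtype.val_injective.comp (hinf.natEmbedding _).injective
  obtain ⟨φ, hφ, hfiber⟩ :=
    exists_strictMono_finite_quotient_fibers hx.of_comp (hτ.comp hx.of_comp)
  set y : ℕ → X := x ∘ φ
  rcases hlink (range y) with ⟨hA, -⟩ | ⟨A', B', hA', hB', -, hB'_unbdd, E, hE, -, hB'E⟩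
  · exact infinite_range_of_injective (hx.of_comp.comp hφ.injective)
      ((isBounded_iff_finite hC).1 hA)
  rw [hC, mem_finGroupSets_iff] at hE
  set D := (fun p : X × X => p.2 * p.1⁻¹) '' E
  have hI : ({p | disp (y p) ∈ D} ∪ ⋃ c ∈ D, {p | ∃ q ≠ p, τ (y p) * (y q)⁻¹ = c}).Finite :=
    (hE.2.preimage (hx.comp hφ.injective).injOn).union (hE.2.biUnion fun c _ => hfiber c)
  refine hB'_unbdd ((isBounded_iff_finite hC).2 ((hI.image (τ ∘ y)).subset ?_))
  intro b hb
  obtain ⟨_, ⟨p, rfl⟩, rfl⟩ := hB' hb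
  obtain ⟨_, ha, hqp⟩ := hB'E hb
  obtain ⟨q, rfl⟩ := hA' ha
  refine ⟨p, ?_, rfl⟩
  by_cases hpq : q = p
  · subst hpq
    exact Or.inl ⟨_, hqp, rfl⟩
  · exact Or.inr (mem_biUnion ⟨_, hqp, rfl⟩ ⟨q, hpq, rfl⟩)

end FinGroupSets

theorem finGroupSets_subset_of_finite_range {X : Type*} (g h : Group X)
    (hfin : ∀ a : X, (range fun v => h.mul (g.mul a v) (h.inv v)).Finite) :
    finGroupSets X g ⊆ finGroupSets X h := by
  let := h
  rintro E ⟨hdiag, F, hF⟩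
  refine mem_finGroupSets_iff.2
    ⟨hdiag, ((F.finite_toSet.biUnion fun a _ => hfin a).insert 1).subset ?_⟩
  rintro _ ⟨p, hp, rfl⟩
  rcases hF p hp with hp | ⟨f, hf, hfp⟩
  · exact Or.inl (by simp [hp])
  · exact Or.inr (mem_biUnion hf ⟨p.1, congrArg (· * p.1⁻¹) hfp.symm⟩)

theorem sets_subset_of_lambdaEquiv {X : Type*} (g h : Group X) {C C' : CoarseStruct X}
    (hC : C.sets = finGroupSets X g) (hC' : C'.sets = finGroupSets X h)
    (hl : C.LambdaEquiv C') : C.sets ⊆ C'.sets := by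
  rw [hC, hC']
  refine finGroupSets_subset_of_finite_range g h fun a => ?_
  have hτ : Injective (g.mul a) := by
    let := g
    exact mul_right_injective a
  have hlink : ∀ A : Set X, C'.Linked A (g.mul a '' A) := by
    let := g
    exact fun A => (hl _ _).1 (close_image_mul_left hC a A).linked
  let := h
  exact finite_range_mul_inv_of_forall_linked_image hC' hτ hlink

/-- If the finitary coarse structures of two group structures on `X` induce
the same linkness relation, then they coincide. -/
theorem finitary_group_lambdaRigid {X : Type*} (g h : Group X)
    (C C' : CoarseStruct X) (hC : C.sets = finGroupSets X g)
    (hC' : C'.sets = finGroupSets X h)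
    (hl : CoarseStruct.LambdaEquiv C C') : C.sets = C'.sets :=
  (sets_subset_of_lambdaEquiv g h hC hC' hl).antisymm
    (sets_subset_of_lambdaEquiv h g hC' hC fun A B => (hl A B).symm)
end

section
/- The parallelity relation on ultrafilters determines closeness: if E and E' are coarse structures on a set X with the same family of unbounded-set ultrafilters B♯ and the same parallelity relation on B♯, then (X, E) and (X, E') are δ-equivalent (induce the same closeness relation). -/
open Set

/-! If `A ⊄ E[B]` for every entourage `E`, the sets `A \ E[B]` generate an ultrafilter `p ∋ A`; it
lies in `B♯` as soon as `B ≠ ∅`, because every bounded set lies in some `E[B]`. An ultrafilter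
containing `B` and parallel to `p` would put some `E[B]` into `p`, which is impossible. Conversely,
`A ⊆ E[B]` lets us push any ultrafilter containing `A` along a choice of `E`-neighbours in `B` to a
parallel one containing `B`. So "`A` lies in a uniform neighbourhood of `B`" is expressed through
`B♯` and parallelity alone (for `B ≠ ∅`), and closeness is this relation in both directions. -/

open scoped SetRel

open Filter

lemma Ultrafilter.exists_forall_mem_of_directed {X : Type*} {ι : Sort*} [Nonempty ι] {s : ι → Set X}
    (hd : Directed (· ⊇ ·) s) (hne : ∀ i, (s i).Nonempty) :
    ∃ p : Ultrafilter X, ∀ i, s i ∈ p := by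
  have : (⨅ i, 𝓟 (s i)).NeBot :=
    Filter.iInf_neBot_of_directed' (hd.mono_comp (· ⊇ ·) (g := 𝓟) fun _ _ => principal_mono.2)
      fun i => principal_neBot_iff.2 (hne i)
  exact ⟨Ultrafilter.of _, fun i => Ultrafilter.of_le _ (mem_iInf_of_mem i (mem_principal_self _))⟩

namespace CoarseStruct

variable {X : Type*} {C : CoarseStruct X}

def LiesNear (C : CoarseStruct X) (A B : Set X) : Prop :=
  ∃ E ∈ C.sets, A ⊆ ball E B

lemma ball_mono_left {E F : Set (X × X)} (h : E ⊆ F) (A : Set X) : ball E A ⊆ ball F A :=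
  fun _ ⟨a, ha, hE⟩ => ⟨a, ha, h hE⟩

lemma inv_mem_sets {E : Set (X × X)} (hE : E ∈ C.sets) : SetRel.inv E ∈ C.sets :=
  C.inv_mem E hE

lemma comp_mem_sets {E F : Set (X × X)} (hE : E ∈ C.sets) (hF : F ∈ C.sets) :
    E ○ F ∈ C.sets :=
  C.comp_mem E hE F hF

lemma directedOn_sets (C : CoarseStruct X) : DirectedOn (· ⊆ ·) C.sets := fun E hE F hF =>
  ⟨E ○ F, comp_mem_sets hE hF, fun ⟨_, b⟩ h => ⟨b, h, C.diagonal_subset F hF rfl⟩,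
    fun ⟨a, _⟩ h => ⟨a, C.diagonal_subset E hE rfl, h⟩⟩

lemma close_iff_liesNear {A B : Set X} : C.Close A B ↔ C.LiesNear A B ∧ C.LiesNear B A := by
  refine ⟨fun ⟨E, hE, hAB, hBA⟩ => ⟨⟨E, hE, hAB⟩, ⟨E, hE, hBA⟩⟩, ?_⟩
  rintro ⟨⟨E, hE, hAB⟩, ⟨F, hF, hBA⟩⟩
  obtain ⟨G, hG, hEG, hFG⟩ := C.directedOn_sets E hE F hF
  exact ⟨G, hG, hAB.trans (ball_mono_left hEG B), hBA.trans (ball_mono_left hFG A)⟩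

lemma liesNear_empty_right {A : Set X} : C.LiesNear A ∅ ↔ A = ∅ := by
  have hball : ∀ E : Set (X × X), ball E (∅ : Set X) = ∅ := fun E => by simp [ball]
  simp only [LiesNear, hball, subset_empty_iff]
  exact ⟨fun ⟨_, _, hA⟩ => hA, fun hA => ⟨_, C.diagonal_mem, hA⟩⟩

lemma isBounded_ball {D : Set X} {E : Set (X × X)} (hD : C.IsBounded D) (hE : E ∈ C.sets) :
    C.IsBounded (ball E D) := by
  obtain ⟨F, hF, x, hDF⟩ := hD
  refine ⟨F ○ E, comp_mem_sets hF hE, x, ?_⟩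
  rintro y ⟨d, hd, hdy⟩
  obtain ⟨x', rfl, hxd⟩ := hDF hd
  exact ⟨x', rfl, d, hxd, hdy⟩

lemma IsBounded.exists_subset_ball {D B : Set X} (hD : C.IsBounded D) (hB : B.Nonempty) :
    ∃ E ∈ C.sets, D ⊆ ball E B := by
  obtain ⟨F, hF, x, hDF⟩ := hD
  obtain ⟨b, hb⟩ := hB
  obtain ⟨H, hH, hbx⟩ := C.cover (b, x)
  refine ⟨H ○ F, comp_mem_sets hH hF, fun d hd => ?_⟩
  obtain ⟨x', rfl, hxd⟩ := hDF hd
  exact ⟨b, hb, x', hbx, hxd⟩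

lemma Parallel.symm {p q : Ultrafilter X} (h : C.Parallel p q) : C.Parallel q p := by
  obtain ⟨E, hE, hball⟩ := h
  refine ⟨SetRel.inv E, inv_mem_sets hE, fun Q hQ => ?_⟩
  by_contra hQp
  obtain ⟨y, ⟨a, ha, hay⟩, hyQ⟩ :=
    q.nonempty_of_mem (inter_mem (hball _ (Ultrafilter.compl_mem_iff_notMem.2 hQp)) hQ)
  exact ha ⟨y, hyQ, hay⟩

lemma Parallel.mem_bsharp {p q : Ultrafilter X} (h : C.Parallel p q) (hp : p ∈ C.Bsharp) :
    q ∈ C.Bsharp := by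
  intro D hD
  obtain ⟨E, hE, hball⟩ := h.symm
  refine Ultrafilter.compl_mem_iff_notMem.2 fun hDq => ?_
  obtain ⟨x, hx, hxc⟩ := p.nonempty_of_mem (inter_mem (hball D hDq) (hp _ (isBounded_ball hD hE)))
  exact hxc hx

lemma exists_parallel_of_subset_ball {A B : Set X} {E : Set (X × X)} (hE : E ∈ C.sets)
    (hAB : A ⊆ ball E B) {p : Ultrafilter X} (hA : A ∈ p) :
    ∃ q : Ultrafilter X, B ∈ q ∧ C.Parallel p q := by
  have : Nonempty X := ⟨(p.nonempty_of_mem hA).some⟩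
  have hAB' : ∀ a ∈ A, ∃ b ∈ B, (b, a) ∈ E := hAB
  choose! g hgB hgE using hAB'
  refine ⟨p.map g, Ultrafilter.mem_map.2 (mem_of_superset hA hgB), SetRel.inv E, inv_mem_sets hE,
    fun P hP => ?_⟩
  exact Ultrafilter.mem_map.2 <|
    mem_of_superset (inter_mem hP hA) fun a ⟨haP, haA⟩ => ⟨a, haP, hgE a haA⟩

lemma liesNear_iff_forall_parallel {A B : Set X} (hB : B.Nonempty) :
    C.LiesNear A B ↔
      ∀ p ∈ C.Bsharp, A ∈ p → ∃ q ∈ C.Bsharp, B ∈ q ∧ C.Parallel p q := by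
  constructor
  · rintro ⟨E, hE, hAB⟩ p hp hA
    obtain ⟨q, hBq, hpq⟩ := exists_parallel_of_subset_ball hE hAB hA
    exact ⟨q, hpq.mem_bsharp hp, hBq, hpq⟩
  intro h
  by_contra hfar
  simp only [LiesNear, not_exists, not_and] at hfar
  have : Nonempty {E // E ∈ C.sets} := ⟨⟨_, C.diagonal_mem⟩⟩
  obtain ⟨p, hp⟩ := Ultrafilter.exists_forall_mem_of_directed
    (s := fun E : {E // E ∈ C.sets} => A \ ball E B)
    (fun E F => by
      obtain ⟨G, hG, hEG, hFG⟩ := C.directedOn_sets E.1 E.2 F.1 F.2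
      exact ⟨⟨G, hG⟩, sdiff_subset_sdiff_right (ball_mono_left hEG B),
        sdiff_subset_sdiff_right (ball_mono_left hFG B)⟩)
    (fun E => sdiff_nonempty.2 (hfar E.1 E.2))
  have hpB : p ∈ C.Bsharp := fun D hD => by
    obtain ⟨E, hE, hDE⟩ := IsBounded.exists_subset_ball hD hB
    exact mem_of_superset (hp ⟨E, hE⟩) fun x hx hxD => hx.2 (hDE hxD)
  obtain ⟨q, -, hBq, hpq⟩ := h p hpB (mem_of_superset (hp ⟨_, C.diagonal_mem⟩) sdiff_subset)
  obtain ⟨E, hE, hball⟩ := hpq.symm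
  obtain ⟨x, hx, -, hx'⟩ := p.nonempty_of_mem (inter_mem (hball B hBq) (hp ⟨E, hE⟩))
  exact hx' hx

lemma liesNear_congr {C' : CoarseStruct X} (h1 : C.Bsharp = C'.Bsharp)
    (h2 : ∀ p ∈ C.Bsharp, ∀ q ∈ C.Bsharp, C.Parallel p q ↔ C'.Parallel p q) {A B : Set X} :
    C.LiesNear A B ↔ C'.LiesNear A B := by
  rcases B.eq_empty_or_nonempty with rfl | hB
  · rw [liesNear_empty_right, liesNear_empty_right]
  rw [liesNear_iff_forall_parallel hB, liesNear_iff_forall_parallel hB, ← h1]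
  exact forall₂_congr fun p hp => imp_congr_right fun _ =>
    exists_congr fun q => and_congr_right fun hq => and_congr_right fun _ => h2 p hp q hq

end CoarseStruct

/-- If two coarse structures have the same `B♯` and the same parallelity
relation on it, then they are δ-equivalent. -/
theorem parallel_determines_close {X : Type*} (C C' : CoarseStruct X)
    (h1 : C.Bsharp = C'.Bsharp)
    (h2 : ∀ p ∈ C.Bsharp, ∀ q ∈ C.Bsharp, C.Parallel p q ↔ C'.Parallel p q) :
    CoarseStruct.DeltaEquiv C C' := by
  intro A B
  rw [CoarseStruct.close_iff_liesNear, CoarseStruct.close_iff_liesNear,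
    CoarseStruct.liesNear_congr h1 h2, CoarseStruct.liesNear_congr h1 h2]
end
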